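/- Let L be a k-list-assignment of a graph G and let (A,B) be a partition of V(G) such that G[A] has an L-colouring with defect d'. If d ≤ d' and for every vertex v ∈ B we have (d+1)·deg_A(v) + deg_B(v) + 1 ≤ (d+1)·k, then G has an L-colouring with defect d'. -/

import Mathlib

/-- The monochromatic subgraph of `G` under colouring `φ`. -/
def SimpleGraph.monoSub {V : Type*} (G : SimpleGraph V) (φ : V → ℕ) : SimpleGraph V where
  Adj u v := G.Adj u v ∧ φ u = φ v
  symm := ⟨fun u v h => ⟨G.symm.symm _ _ h.1, h.2.symm⟩⟩
  loopless := ⟨fun v h => G.loopless.irrefl v h.1⟩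

/-- The colouring `φ` has defect at most `d`: every vertex has at most `d`
neighbours of its own colour. -/
def SimpleGraph.DefectLe {V : Type*} (G : SimpleGraph V) (φ : V → ℕ) (d : ℕ) : Prop :=
  ∀ v : V, {w : V | G.Adj v w ∧ φ w = φ v}.ncard ≤ d

/-- The colouring `φ` has clustering at most `c`: every connected component of
the monochromatic subgraph has at most `c` vertices. -/
def SimpleGraph.ClusterLe {V : Type*} (G : SimpleGraph V) (φ : V → ℕ) (c : ℕ) : Prop :=
  ∀ v : V, {w : V | (G.monoSub φ).Reachable v w}.ncard ≤ c

/-- Twice the number of edges of `G` inside the vertex set `s`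
(the number of ordered adjacent pairs in `s`). -/
noncomputable def SimpleGraph.degPairs {V : Type*} (G : SimpleGraph V) (s : Finset V) : ℕ :=
  {p : V × V | p.1 ∈ s ∧ p.2 ∈ s ∧ G.Adj p.1 p.2}.ncard

/-!
Keep `φ₀` on `A`; a vertex `v ∈ B` may then use every colour of `L v` not used by `φ₀` on its
`A`-neighbours, at least `k - deg_A(v)` colours, and the hypothesis says
`deg_B(v) < (d + 1) (k - deg_A(v))`. Lovász's argument colours `G[B]` from such lists with
defect `d`: among all list colourings take one with the fewest monochromatic edges. If some
vertex had more than `d` neighbours of its own colour, by pigeonhole some colour of its list is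
used by at most `d` of its neighbours, and recolouring it with that colour removes monochromatic
edges. Colours of `B` avoid those of adjacent `A`-vertices, so the defect on `A` is that of `φ₀`.
-/

open Finset

namespace SimpleGraph

variable {V : Type*} [Fintype V] (H : SimpleGraph V) [DecidableRel H.Adj]

def monoNeighborFinset (ψ : V → ℕ) (v : V) : Finset V := {w | H.Adj v w ∧ ψ w = ψ v}

def monoDegreeSum (ψ : V → ℕ) : ℕ := ∑ v, #(H.monoNeighborFinset ψ v)

theorem defectLe_iff (ψ : V → ℕ) (d : ℕ) :
    H.DefectLe ψ d ↔ ∀ v, #(H.monoNeighborFinset ψ v) ≤ d := by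
  simp only [DefectLe, monoNeighborFinset, ← Set.ncard_coe_finset, coe_filter, mem_univ, true_and]

variable [DecidableEq V]

theorem monoDegreeSum_eq (ψ : V → ℕ) (v : V) :
    H.monoDegreeSum ψ = 2 * #(H.monoNeighborFinset ψ v) +
      ∑ u ∈ {v}ᶜ, ∑ w ∈ {v}ᶜ, if H.Adj u w ∧ ψ w = ψ u then 1 else 0 := by
  have hsymm : ∀ u, (if H.Adj u v ∧ ψ v = ψ u then 1 else 0) =
      if H.Adj v u ∧ ψ u = ψ v then 1 else 0 := fun u => by
    simp only [H.adj_comm, eq_comm]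
  simp only [monoDegreeSum, monoNeighborFinset, card_filter]
  rw [Fintype.sum_eq_add_sum_compl v]
  simp only [Fintype.sum_eq_add_sum_compl v
    (f := fun w => if H.Adj _ w ∧ ψ w = ψ _ then 1 else 0)]
  rw [sum_add_distrib, sum_congr rfl fun u _ => hsymm u]
  simp only [H.irrefl, false_and, if_false]
  ring

theorem monoDegreeSum_update (ψ : V → ℕ) (v : V) (c : ℕ) :
    H.monoDegreeSum (Function.update ψ v c) + 2 * #(H.monoNeighborFinset ψ v) =
      H.monoDegreeSum ψ + 2 * #{w ∈ H.neighborFinset v | ψ w = c} := by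
  have hrest : ∀ u ∈ ({v}ᶜ : Finset V), ∀ w ∈ ({v}ᶜ : Finset V),
      (if H.Adj u w ∧ Function.update ψ v c w = Function.update ψ v c u then 1 else 0) =
      if H.Adj u w ∧ ψ w = ψ u then 1 else 0 := by
    intro u hu w hw
    rw [Function.update_of_ne (by simpa using hw), Function.update_of_ne (by simpa using hu)]
  have hv : H.monoNeighborFinset (Function.update ψ v c) v =
      {w ∈ H.neighborFinset v | ψ w = c} := by
    ext w
    simp only [monoNeighborFinset, mem_filter, mem_univ, true_and, mem_neighborFinset,
      Function.update_self]
    constructor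
    · rintro ⟨hvw, h⟩
      exact ⟨hvw, by rwa [Function.update_of_ne hvw.ne'] at h⟩
    · rintro ⟨hvw, h⟩
      exact ⟨hvw, by rwa [Function.update_of_ne hvw.ne']⟩
  rw [H.monoDegreeSum_eq _ v, H.monoDegreeSum_eq _ v, sum_congr rfl fun u hu =>
    sum_congr rfl (hrest u hu), hv]
  ring

theorem exists_defectLe_of_degree_lt {d : ℕ} (S : V → Finset ℕ)
    (hS : ∀ v, H.degree v < (d + 1) * #(S v)) :
    ∃ ψ, (∀ v, ψ v ∈ S v) ∧ H.DefectLe ψ d := by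
  have hne : (Fintype.piFinset S).Nonempty :=
    Fintype.piFinset_nonempty.2 fun v =>
      card_pos.1 (Nat.pos_of_mul_pos_left (Nat.zero_lt_of_lt (hS v)))
  obtain ⟨ψ, hψS, hmin⟩ := exists_min_image _ H.monoDegreeSum hne
  rw [Fintype.mem_piFinset] at hψS
  refine ⟨ψ, hψS, (H.defectLe_iff ψ d).2 fun v => ?_⟩
  by_contra! hv
  obtain ⟨c, hcS, hc⟩ := exists_card_fiber_lt_of_card_lt_mul (f := ψ)
    (s := H.neighborFinset v) (by rw [card_neighborFinset_eq_degree, mul_comm]; exact hS v)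
  have hψ'S : Function.update ψ v c ∈ Fintype.piFinset S := Fintype.mem_piFinset.2
    ((Function.forall_update_iff ψ fun u c => c ∈ S u).2 ⟨hcS, fun u _ => hψS u⟩)
  have hmin' := hmin _ hψ'S
  have hupdate := H.monoDegreeSum_update ψ v c
  omega

end SimpleGraph

section ResidualLists

variable {V : Type*} [Fintype V] (G : SimpleGraph V) (A : Set V) (φ₀ : V → ℕ)
  (L : V → Finset ℕ)

open Classical in
/-- Singleton lists on `A` freeze the colouring `φ₀` there. -/
noncomputable def residualLists (v : V) : Finset ℕ :=
  if v ∈ A then {φ₀ v} else L v \ ({w | w ∈ A ∧ G.Adj v w} : Finset V).image φ₀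

variable {G A φ₀ L}

theorem residualLists_of_mem {v : V} (hv : v ∈ A) : residualLists G A φ₀ L v = {φ₀ v} := by
  simp [residualLists, hv]

theorem mem_residualLists_of_notMem {v : V} (hv : v ∉ A) {c : ℕ} :
    c ∈ residualLists G A φ₀ L v ↔ c ∈ L v ∧ ∀ w ∈ A, G.Adj v w → φ₀ w ≠ c := by
  simp [residualLists, hv]

theorem mem_of_mem_residualLists (hφ₀L : ∀ v ∈ A, φ₀ v ∈ L v) {v : V} {c : ℕ}
    (hc : c ∈ residualLists G A φ₀ L v) : c ∈ L v := by
  by_cases hv : v ∈ A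
  · rw [residualLists_of_mem hv, mem_singleton] at hc
    exact hc ▸ hφ₀L v hv
  · exact ((mem_residualLists_of_notMem hv).1 hc).1

theorem sub_ncard_le_card_residualLists {k : ℕ} (hL : ∀ v, k ≤ #(L v)) {v : V} (hv : v ∉ A) :
    k - {w | w ∈ A ∧ G.Adj v w}.ncard ≤ #(residualLists G A φ₀ L v) := by
  classical
  have hsdiff := le_card_sdiff (({w | w ∈ A ∧ G.Adj v w} : Finset V).image φ₀) (L v)
  have himage := card_image_le (s := ({w | w ∈ A ∧ G.Adj v w} : Finset V)) (f := φ₀)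
  have hNA : #({w | w ∈ A ∧ G.Adj v w} : Finset V) = {w | w ∈ A ∧ G.Adj v w}.ncard := by
    rw [← Set.ncard_coe_finset]; simp
  have hLv := hL v
  simp only [residualLists, hv, if_false]
  omega

variable {H : SimpleGraph V}

theorem degree_lt_card_residualLists [DecidableRel H.Adj]
    (hH : ∀ v w, H.Adj v w ↔ v ∉ A ∧ w ∉ A ∧ G.Adj v w)
    {k d : ℕ} (hL : ∀ v, k ≤ #(L v))
    (hB : ∀ v : V, v ∉ A →
      (d + 1) * {w : V | w ∈ A ∧ G.Adj v w}.ncard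
        + {w : V | w ∉ A ∧ G.Adj v w}.ncard + 1 ≤ (d + 1) * k) (v : V) :
    H.degree v < (d + 1) * #(residualLists G A φ₀ L v) := by
  by_cases hv : v ∈ A
  · have hdeg : H.degree v = 0 := by
      rw [← SimpleGraph.card_neighborFinset_eq_degree, card_eq_zero, eq_empty_iff_forall_notMem]
      simp [hH, hv]
    simp [hdeg, residualLists_of_mem hv]
  · have hdegB : H.degree v = {w | w ∉ A ∧ G.Adj v w}.ncard := by
      rw [← SimpleGraph.card_neighborFinset_eq_degree, ← Set.ncard_coe_finset]
      congr 1; ext w; simp [hH, hv]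
    have hcard := Nat.mul_le_mul_left (d + 1)
      (sub_ncard_le_card_residualLists (G := G) (φ₀ := φ₀) hL hv)
    have hBv := hB v hv
    rw [Nat.mul_sub] at hcard
    omega

theorem defectLe_of_mem_residualLists (hH : ∀ v w, H.Adj v w ↔ v ∉ A ∧ w ∉ A ∧ G.Adj v w)
    {d d' : ℕ} (hdd' : d ≤ d')
    (hφ₀A : ∀ v ∈ A, {w : V | w ∈ A ∧ G.Adj v w ∧ φ₀ w = φ₀ v}.ncard ≤ d')
    {ψ : V → ℕ} (hψS : ∀ v, ψ v ∈ residualLists G A φ₀ L v) (hψ : H.DefectLe ψ d) :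
    G.DefectLe ψ d' := by
  have hψA : ∀ v ∈ A, ψ v = φ₀ v := fun v hv => by
    simpa [residualLists_of_mem hv] using hψS v
  have hψB : ∀ v ∉ A, ∀ w ∈ A, G.Adj v w → φ₀ w ≠ ψ v := fun v hv =>
    ((mem_residualLists_of_notMem hv).1 (hψS v)).2
  intro v
  by_cases hv : v ∈ A
  · refine le_trans (Set.ncard_le_ncard ?_ (Set.toFinite _)) (hφ₀A v hv)
    rintro w ⟨hvw, hψw⟩
    by_cases hw : w ∈ A
    · exact ⟨hw, hvw, by rwa [← hψA w hw, ← hψA v hv]⟩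
    · exact absurd (hψA v hv ▸ hψw.symm) (hψB w hw v hv hvw.symm)
  · refine le_trans (Set.ncard_le_ncard ?_ (Set.toFinite _)) ((hψ v).trans hdd')
    rintro w ⟨hvw, hψw⟩
    have hw : w ∉ A := fun hw => hψB v hv w hw hvw (hψA w hw ▸ hψw)
    exact ⟨(hH v w).2 ⟨hv, hw, hvw⟩, hψw⟩

end ResidualLists

theorem stmt2 {V : Type*} [Fintype V] (G : SimpleGraph V) (k d d' : ℕ) (hdd' : d ≤ d')
    (A : Set V) (L : V → Finset ℕ) (hL : ∀ v, k ≤ (L v).card)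
    (hA : ∃ φ₀ : V → ℕ, (∀ v ∈ A, φ₀ v ∈ L v) ∧
      ∀ v ∈ A, {w : V | w ∈ A ∧ G.Adj v w ∧ φ₀ w = φ₀ v}.ncard ≤ d')
    (hB : ∀ v : V, v ∉ A →
      (d + 1) * {w : V | w ∈ A ∧ G.Adj v w}.ncard
        + {w : V | w ∉ A ∧ G.Adj v w}.ncard + 1 ≤ (d + 1) * k) :
    ∃ φ : V → ℕ, (∀ v, φ v ∈ L v) ∧ G.DefectLe φ d' := by
  classical
  obtain ⟨φ₀, hφ₀L, hφ₀A⟩ := hA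
  set H := ((⊤ : G.Subgraph).induce Aᶜ).spanningCoe
  have hH : ∀ v w, H.Adj v w ↔ v ∉ A ∧ w ∉ A ∧ G.Adj v w := fun v w => by simp [H]
  obtain ⟨ψ, hψS, hψ⟩ := H.exists_defectLe_of_degree_lt (residualLists G A φ₀ L)
    (degree_lt_card_residualLists hH hL hB)
  exact ⟨ψ, fun v => mem_of_mem_residualLists hφ₀L (hψS v),
    defectLe_of_mem_residualLists hH hdd' hφ₀A hψS hψ⟩
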